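/- Let g be analytic near 0 with g(z) = z(1 + a z^p + o(z^p)) for some real a > 0. Then there exists r₀ > 0 such that for all z with 0 < |z| < r₀ and |arg(z^p)| ≤ π/8, one has |g(z)| > |z| and |g'(z)| > |g(z)|/|z| > 1. -/

import Mathlib

/-! Write `g z = z (1 + a z^p) + h z` with `h = o(z^(p+1))`; Cauchy's estimate on the circle of
radius `|z|/2` around `z` upgrades this to `h' = o(z^p)`. When `|arg (z^p)| ≤ π/8` we have
`Re (z^p) ≥ c |z|^p` with `c = cos (π/8) > 1/2`, hence
`1 + a c |z|^p ≤ |1 + a z^p| ≤ 1 + a |z|^p` and `|1 + a (p+1) z^p| ≥ 1 + 2 a c |z|^p`.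
As `2c > 1`, errors of size `ε |z|^p` are absorbed once `ε` is a small multiple of `a`. -/

open Filter Asymptotics Topology Metric

section CauchyEstimate

variable {E : Type*} [NormedAddCommGroup E] [NormedSpace ℂ E] {f : ℂ → E} {n : ℕ}

theorem deriv_zero_eq_zero_of_isLittleO_pow (ho : f =o[𝓝 0] fun z => z ^ (n + 1)) :
    deriv f 0 = 0 := by
  have hf0 : f 0 = 0 := ho.isBigO.eq_zero_imp.self_of_nhds (by simp)
  have hpow : (fun z : ℂ => z ^ (n + 1)) =O[𝓝 0] fun z => z := by
    simpa only [pow_succ, one_mul] using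
      (((continuous_pow n).continuousAt (x := (0 : ℂ))).isBigO_one ℂ).mul
        (isBigO_refl (fun z : ℂ => z) _)
  refine (hasDerivAt_iff_isLittleO_nhds_zero.2 ?_).deriv
  simpa [hf0] using ho.trans_isBigO hpow

theorem deriv_isLittleO_pow (hf : ∀ᶠ z in 𝓝 0, DifferentiableAt ℂ f z)
    (ho : f =o[𝓝 0] fun z => z ^ (n + 1)) : deriv f =o[𝓝 0] fun z => z ^ n := by
  refine IsLittleO.of_bound fun ε hε => ?_
  -- the circle of radius `‖z‖ / 2` around `z` lies in the disc of radius `3/2 ‖z‖` around `0`,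
  -- so with this `C` Cauchy's estimate comes out as exactly `ε ‖z‖ ^ n`
  set C : ℝ := 2 * (3 / 2) ^ (n + 1)
  obtain ⟨r, hr, hnear⟩ :=
    Metric.eventually_nhds_iff_ball.1 (hf.and (ho.def (by positivity : 0 < ε / C)))
  filter_upwards [ball_mem_nhds (0 : ℂ) (half_pos hr)] with z hz
  rw [mem_ball_zero_iff] at hz
  rcases eq_or_ne z 0 with rfl | hz0
  · rw [deriv_zero_eq_zero_of_isLittleO_pow ho, norm_zero]
    positivity
  have hR : 0 < ‖z‖ / 2 := by positivity
  have hnorm : ∀ w ∈ closedBall z (‖z‖ / 2), ‖w‖ ≤ 3 / 2 * ‖z‖ := fun w hw => by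
    rw [mem_closedBall, dist_eq_norm] at hw
    linarith [norm_le_norm_add_norm_sub' w z]
  have hsub : closedBall z (‖z‖ / 2) ⊆ ball 0 r := fun w hw => by
    rw [mem_ball_zero_iff]
    linarith [hnorm w hw]
  have hdiff : DiffContOnCl ℂ f (ball z (‖z‖ / 2)) := by
    refine DifferentiableOn.diffContOnCl fun w hw => ?_
    rw [closure_ball z hR.ne'] at hw
    exact (hnear w (hsub hw)).1.differentiableWithinAt
  have hsphere : ∀ w ∈ sphere z (‖z‖ / 2), ‖f w‖ ≤ ε / C * (3 / 2 * ‖z‖) ^ (n + 1) := by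
    intro w hw
    have hw' := sphere_subset_closedBall hw
    calc ‖f w‖ ≤ ε / C * ‖w ^ (n + 1)‖ := (hnear w (hsub hw')).2
      _ ≤ ε / C * (3 / 2 * ‖z‖) ^ (n + 1) := by rw [norm_pow]; gcongr; exact hnorm w hw'
  calc ‖deriv f z‖ ≤ ε / C * (3 / 2 * ‖z‖) ^ (n + 1) / (‖z‖ / 2) :=
        Complex.norm_deriv_le_of_forall_mem_sphere_norm_le hR hdiff hsphere
    _ = ε * ‖z ^ n‖ := by
        have : ‖z‖ ≠ 0 := norm_ne_zero_iff.2 hz0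
        simp only [C, norm_pow, mul_pow, pow_succ]
        field_simp

end CauchyEstimate

theorem Real.one_half_lt_cos_pi_div_eight : 1 / 2 < Real.cos (Real.pi / 8) := by
  rw [← Real.cos_pi_div_three]
  exact Real.cos_lt_cos_of_nonneg_of_le_pi (by positivity) (by linarith [Real.pi_pos])
    (by linarith [Real.pi_pos])

theorem Complex.cos_mul_norm_le_re {w : ℂ} {θ : ℝ} (hθ : θ ≤ Real.pi)
    (h : |Complex.arg w| ≤ θ) : Real.cos θ * ‖w‖ ≤ w.re := by
  rw [← Complex.norm_mul_cos_arg, mul_comm, ← Real.cos_abs (Complex.arg w)]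
  gcongr
  exact Real.cos_le_cos_of_nonneg_of_le_pi (abs_nonneg _) hθ h

theorem Complex.le_norm_one_add_ofReal_mul {b c : ℝ} {w : ℂ} (hb : 0 ≤ b)
    (hw : c * ‖w‖ ≤ w.re) : 1 + b * c * ‖w‖ ≤ ‖1 + (b : ℂ) * w‖ := by
  have hre : (1 + (b : ℂ) * w).re = 1 + b * w.re := by simp
  calc 1 + b * c * ‖w‖ = 1 + b * (c * ‖w‖) := by ring
    _ ≤ (1 + (b : ℂ) * w).re := by rw [hre]; gcongr
    _ ≤ ‖1 + (b : ℂ) * w‖ := Complex.re_le_norm _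

theorem hasDerivAt_mul_one_add_mul_pow (a : ℂ) (p : ℕ) (z : ℂ) :
    HasDerivAt (fun z => z * (1 + a * z ^ p)) (1 + a * (p + 1) * z ^ p) z := by
  have hf : (fun z => z * (1 + a * z ^ p)) = fun z => z + a * z ^ (p + 1) := by
    funext w
    ring
  rw [hf]
  refine ((hasDerivAt_id' z).fun_add ((hasDerivAt_pow (p + 1) z).const_mul a)).congr_deriv ?_
  push_cast
  ring

section ModelComparison

variable {a c ε : ℝ} {p : ℕ} {z u v : ℂ}

theorem norm_div_mem_Icc_of_norm_sub_le (ha : 0 ≤ a) (hz : z ≠ 0)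
    (hw : c * ‖z ^ p‖ ≤ (z ^ p).re) (hu : ‖u - z * (1 + a * z ^ p)‖ ≤ ε * ‖z‖ ^ (p + 1)) :
    ‖u‖ / ‖z‖ ∈ Set.Icc (1 + (a * c - ε) * ‖z‖ ^ p) (1 + (a + ε) * ‖z‖ ^ p) := by
  have hdiv : ‖u / z - (1 + a * z ^ p)‖ ≤ ε * ‖z‖ ^ p := by
    rw [← mul_div_cancel_left₀ (1 + (a : ℂ) * z ^ p) hz, ← sub_div, norm_div,
      div_le_iff₀ (norm_pos_iff.2 hz), mul_assoc, ← pow_succ]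
    exact hu
  have hlow := Complex.le_norm_one_add_ofReal_mul ha hw
  rw [norm_pow] at hlow
  have hup : ‖1 + (a : ℂ) * z ^ p‖ ≤ 1 + a * ‖z‖ ^ p := by
    calc ‖1 + (a : ℂ) * z ^ p‖ ≤ ‖(1 : ℂ)‖ + ‖(a : ℂ) * z ^ p‖ := norm_add_le _ _
      _ = 1 + a * ‖z‖ ^ p := by simp [abs_of_nonneg ha]
  rw [← norm_div]
  constructor <;> linarith [norm_sub_norm_le (1 + (a : ℂ) * z ^ p) (u / z),
    norm_sub_rev (1 + (a : ℂ) * z ^ p) (u / z),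
    norm_le_norm_add_norm_sub' (u / z) (1 + (a : ℂ) * z ^ p)]

theorem expansion_of_norm_sub_le (ha : 0 ≤ a) (hc : 0 ≤ c) (hp : 1 ≤ p)
    (hε : 2 * ε < a * (2 * c - 1)) (hz : z ≠ 0) (hw : c * ‖z ^ p‖ ≤ (z ^ p).re)
    (hu : ‖u - z * (1 + a * z ^ p)‖ ≤ ε * ‖z‖ ^ (p + 1))
    (hv : ‖v - (1 + a * (p + 1) * z ^ p)‖ ≤ ε * ‖z‖ ^ p) :
    ‖u‖ > ‖z‖ ∧ ‖v‖ > ‖u‖ / ‖z‖ ∧ ‖u‖ / ‖z‖ > 1 := by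
  have hz' : 0 < ‖z‖ := norm_pos_iff.2 hz
  have ht : 0 < ‖z‖ ^ p := pow_pos hz' p
  obtain ⟨hlow, hup⟩ := norm_div_mem_Icc_of_norm_sub_le ha hz hw hu
  have hv_low : 1 + (a * (p + 1) * c - ε) * ‖z‖ ^ p ≤ ‖v‖ := by
    have h := Complex.le_norm_one_add_ofReal_mul (b := a * (p + 1)) (by positivity) hw
    push_cast at h
    rw [norm_pow] at h
    linarith [norm_sub_norm_le (1 + (a : ℂ) * (p + 1) * z ^ p) v,
      norm_sub_rev (1 + (a : ℂ) * (p + 1) * z ^ p) v]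
  have hp' : (2 : ℝ) ≤ p + 1 := by norm_cast; omega
  have hratio : 1 < ‖u‖ / ‖z‖ := by
    have : 0 < a * c - ε := by nlinarith
    nlinarith
  refine ⟨(one_lt_div hz').1 hratio, ?_, hratio⟩
  have : a + ε < a * (p + 1) * c - ε := by nlinarith [mul_nonneg ha hc]
  nlinarith

end ModelComparison

/-- If `g` is analytic near `0` with `g(z) = z(1 + a z^p + o(z^p))` for real
`a > 0`, then there is `r₀ > 0` such that for `0 < |z| < r₀` with `|arg(z^p)| ≤ π/8`
one has `|g(z)| > |z|` and `|g'(z)| > |g(z)|/|z| > 1`. -/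
theorem stmt1 (g : ℂ → ℂ) (a : ℝ) (p : ℕ) (ha : 0 < a) (hp : 1 ≤ p)
    (hg : AnalyticAt ℂ g 0)
    (hexp : (fun z => g z - z * (1 + (a : ℂ) * z ^ p)) =o[𝓝 (0 : ℂ)] fun z => z ^ (p + 1)) :
    ∃ r₀ > (0 : ℝ), ∀ z : ℂ, 0 < ‖z‖ → ‖z‖ < r₀ → |Complex.arg (z ^ p)| ≤ Real.pi / 8 →
      ‖g z‖ > ‖z‖ ∧ ‖deriv g z‖ > ‖g z‖ / ‖z‖ ∧ ‖g z‖ / ‖z‖ > 1 := by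
  set c := Real.cos (Real.pi / 8)
  have hc : 1 / 2 < c := Real.one_half_lt_cos_pi_div_eight
  have hgap : 0 < a * (2 * c - 1) := mul_pos ha (by linarith)
  set ε := a * (2 * c - 1) / 4 with hε_def
  have hε : 0 < ε := by linarith
  have hdiff : ∀ᶠ z in 𝓝 (0 : ℂ), DifferentiableAt ℂ g z :=
    hg.eventually_analyticAt.mono fun z hz => hz.differentiableAt
  have hderiv : (fun z => deriv g z - (1 + (a : ℂ) * (p + 1) * z ^ p)) =o[𝓝 (0 : ℂ)]
      fun z => z ^ p := by
    refine (deriv_isLittleO_pow (hdiff.mono fun z hz => ?_) hexp).congr' ?_ EventuallyEq.rfl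
    · exact hz.sub (hasDerivAt_mul_one_add_mul_pow _ p z).differentiableAt
    · filter_upwards [hdiff] with z hz
      exact (hz.hasDerivAt.sub (hasDerivAt_mul_one_add_mul_pow _ p z)).deriv
  obtain ⟨δ, hδ, hnear⟩ := Metric.eventually_nhds_iff_ball.1 ((hexp.def hε).and (hderiv.def hε))
  refine ⟨δ, hδ, fun z hz0 hzδ harg => ?_⟩
  obtain ⟨hu, hv⟩ := hnear z (mem_ball_zero_iff.2 hzδ)
  rw [norm_pow] at hu hv
  exact expansion_of_norm_sub_le ha.le (by linarith) hp (by linarith) (norm_pos_iff.1 hz0)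
    (Complex.cos_mul_norm_le_re (by linarith [Real.pi_pos]) harg) hu hv
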